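/- arXiv:1312.2519 — 3 statements merged into one kernel-verified Lean document; each statement's English description precedes it below -/
import Mathlib

section
/- Let x, y : [t₀, t₀ + τ] → ℝ be differentiable with x(t₀) = y(t₀) and |x'(t) - y'(t)| ≤ L·|x(t) - y(t)| + C·τ·h^{p+1/2} for all t ∈ [t₀, t₀+τ], where L, C ≥ 0, τ ∈ [0,1], and L·τ ≤ 1. Then |x(t) - y(t)| ≤ e·C·τ²·h^{p+1/2} for all t ∈ [t₀, t₀ + τ]. -/
/-- Quantitative shock-location comparison (Lemma 5.5): the auxiliary shock and the
semi-discrete shock stay within `e · C · τ² · h^(p+1/2)` of each other. -/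
theorem shock_location_comparison (t₀ τ L C h : ℝ) (p : ℕ)
    (hτ0 : 0 ≤ τ) (hτ1 : τ ≤ 1) (hL : 0 ≤ L) (hC : 0 ≤ C) (hh : 0 < h)
    (hLτ : L * τ ≤ 1)
    (x y x' y' : ℝ → ℝ)
    (hx : ∀ t ∈ Set.Icc t₀ (t₀ + τ), HasDerivAt x (x' t) t)
    (hy : ∀ t ∈ Set.Icc t₀ (t₀ + τ), HasDerivAt y (y' t) t)
    (hinit : x t₀ = y t₀)
    (hclose : ∀ t ∈ Set.Icc t₀ (t₀ + τ),
      |x' t - y' t| ≤ L * |x t - y t| + C * τ * h ^ ((p : ℝ) + 1/2)) :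
    ∀ t ∈ Set.Icc t₀ (t₀ + τ),
      |x t - y t| ≤ Real.exp 1 * C * τ ^ 2 * h ^ ((p : ℝ) + 1/2) := by
  set ε : ℝ := C * τ * h ^ ((p : ℝ) + 1/2) with hε
  have hε0 : 0 ≤ ε := by positivity
  intro t ht
  have key : ∀ s ∈ Set.Icc t₀ (t₀ + τ),
      ‖x s - y s‖ ≤ gronwallBound 0 L ε (s - t₀) := by
    apply norm_le_gronwallBound_of_norm_deriv_right_le
      (f := fun s => x s - y s) (f' := fun s => x' s - y' s)
    · exact ContinuousOn.sub
        (fun s hs => ((hx s hs).continuousAt).continuousWithinAt)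
        (fun s hs => ((hy s hs).continuousAt).continuousWithinAt)
    · intro s hs
      have hs' : s ∈ Set.Icc t₀ (t₀ + τ) := Set.Ico_subset_Icc_self hs
      exact (((hx s hs').sub (hy s hs')).hasDerivWithinAt)
    · simp [hinit]
    · intro s hs
      have hs' : s ∈ Set.Icc t₀ (t₀ + τ) := Set.Ico_subset_Icc_self hs
      simpa [Real.norm_eq_abs] using hclose s hs'
  have hb := key t ht
  rw [Real.norm_eq_abs] at hb
  refine hb.trans ?_
  set s := t - t₀ with hsdef
  have hs0 : 0 ≤ s := by simp [hsdef]; linarith [ht.1]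
  have hsτ : s ≤ τ := by simp [hsdef]; linarith [ht.2]
  have hgoal : gronwallBound 0 L ε s ≤ Real.exp 1 * C * τ ^ 2 * h ^ ((p : ℝ) + 1/2) := by
    have hε' : ε * τ ≤ C * τ ^ 2 * h ^ ((p : ℝ) + 1/2) := by
      rw [hε]; ring_nf; nlinarith [pow_pos (Real.rpow_pos_of_pos hh ((p:ℝ)+1/2)) 1]
    rcases eq_or_lt_of_le hL with hL0 | hLpos
    · -- L = 0
      rw [← hL0]
      rw [gronwallBound_K0]
      have h1 : (1:ℝ) ≤ Real.exp 1 := by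
        have := Real.add_one_le_exp (1:ℝ); linarith
      have : ε * s ≤ ε * τ := mul_le_mul_of_nonneg_left hsτ hε0
      calc (0:ℝ) + ε * s ≤ ε * τ := by linarith
        _ ≤ C * τ ^ 2 * h ^ ((p : ℝ) + 1/2) := hε'
        _ ≤ Real.exp 1 * C * τ ^ 2 * h ^ ((p : ℝ) + 1/2) := by
            nlinarith [mul_nonneg (mul_nonneg hC (sq_nonneg τ))
              (Real.rpow_nonneg hh.le ((p:ℝ)+1/2))]
    · -- L > 0
      rw [gronwallBound_of_K_ne_0 (ne_of_gt hLpos)]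
      simp only [zero_mul, zero_add]
      have hexp : Real.exp (L * s) - 1 ≤ L * s * Real.exp (L * s) := by
        have h1 : (1 : ℝ) - L * s ≤ Real.exp (-(L * s)) := by
          linarith [Real.add_one_le_exp (-(L * s))]
        have h2 : Real.exp (L * s) * (1 - L * s) ≤ 1 := by
          have := mul_le_mul_of_nonneg_left h1 (Real.exp_pos (L * s)).le
          rwa [← Real.exp_add, add_neg_cancel, Real.exp_zero] at this
        nlinarith [h2]
      have hLs1 : L * s ≤ 1 := le_trans (mul_le_mul_of_nonneg_left hsτ hLpos.le) hLτ
      have hexp1 : Real.exp (L * s) ≤ Real.exp 1 := Real.exp_le_exp.mpr hLs1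
      have step1 : ε / L * (Real.exp (L * s) - 1) ≤ ε * s * Real.exp (L * s) := by
        rw [div_mul_eq_mul_div, div_le_iff₀ hLpos]
        calc ε * (Real.exp (L * s) - 1) ≤ ε * (L * s * Real.exp (L * s)) :=
              mul_le_mul_of_nonneg_left hexp hε0
          _ = ε * s * Real.exp (L * s) * L := by ring
      refine step1.trans ?_
      calc ε * s * Real.exp (L * s) ≤ ε * τ * Real.exp 1 := by
            have h1 : ε * s ≤ ε * τ := mul_le_mul_of_nonneg_left hsτ hε0
            have h2 : 0 ≤ ε * s := mul_nonneg hε0 hs0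
            nlinarith [Real.exp_pos (L * s), Real.exp_pos 1]
        _ ≤ Real.exp 1 * (C * τ ^ 2 * h ^ ((p : ℝ) + 1/2)) := by
            nlinarith [Real.exp_pos 1]
        _ = Real.exp 1 * C * τ ^ 2 * h ^ ((p : ℝ) + 1/2) := by ring
  exact hgoal
end

section
/- Let w : [x₀ - h, x₀ + h] → ℝ be defined by w(x) = Σ_{l=0}^p (J_l/(2·l!))·(x-x₀)^l for x > x₀ and w(x) = −Σ_{l=0}^p (J_l/(2·l!))·(x-x₀)^l for x < x₀, with |J_l| ≤ D·h^{p+2-l(1+α)}, α = 1/p, 0 < h ≤ 1. Then ‖w‖_{L²(x₀-h, x₀+h)} ≤ √2 · e · D · h^{p+3/2}. -/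
/-!
Off the null set `{x₀}` the antisymmetrized jump has the modulus of its polynomial
`∑ J l / (2 l!) (x - x₀)^l`. Since `h ≤ 1` and `l ≤ p`, each `|J l| |x - x₀|^l` is at most
`D h^(p+1)`, so the exponential series bounds the polynomial by `e D h^(p+1)` on the interval,
and integrating the square over an interval of length `2h` gives the claim.
-/

open Finset MeasureTheory

open scoped Nat

lemma abs_sum_div_factorial_le {n : ℕ} {c : ℕ → ℝ} {M : ℝ} (hM : 0 ≤ M)
    (hc : ∀ l ∈ range n, |c l| ≤ M) :
    |∑ l ∈ range n, c l / l !| ≤ Real.exp 1 * M :=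
  calc |∑ l ∈ range n, c l / l !|
      ≤ ∑ l ∈ range n, |c l / l !| := abs_sum_le_sum_abs _ _
    _ ≤ ∑ l ∈ range n, M * ((1 : ℝ) ^ l / l !) := by
        gcongr with l hl
        rw [abs_div, Nat.abs_cast, one_pow, mul_one_div]
        gcongr
        exact hc l hl
    _ = M * ∑ l ∈ range n, (1 : ℝ) ^ l / l ! := (mul_sum _ _ _).symm
    _ ≤ Real.exp 1 * M := by
        rw [mul_comm]
        gcongr
        exact Real.sum_le_exp_of_nonneg zero_le_one n

lemma abs_mul_pow_le_of_abs_le_rpow {p l : ℕ} (hl : l ≤ p) {h D J t : ℝ}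
    (hh : 0 < h) (hh1 : h ≤ 1) (hD : 0 ≤ D)
    (hJ : |J| ≤ D * h ^ ((p : ℝ) + 2 - l * (1 + 1 / p))) (ht : |t| ≤ h) :
    |J * t ^ l| ≤ D * h ^ (p + 1) := by
  have hexp : (p : ℝ) + 1 ≤ p + 2 - l * (1 + 1 / p) + l := by
    have : (l : ℝ) / p ≤ 1 := div_le_one_of_le₀ (by exact_mod_cast hl) p.cast_nonneg
    have : (l : ℝ) * (1 + 1 / p) = l + l / p := by ring
    linarith
  calc |J * t ^ l| = |J| * |t| ^ l := by rw [abs_mul, abs_pow]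
    _ ≤ D * h ^ ((p : ℝ) + 2 - l * (1 + 1 / p)) * h ^ l := by gcongr
    _ = D * h ^ ((p : ℝ) + 2 - l * (1 + 1 / p) + l) := by
        rw [mul_assoc, ← Real.rpow_natCast h l, ← Real.rpow_add hh]
    _ ≤ D * h ^ ((p : ℝ) + 1) := by
        exact mul_le_mul_of_nonneg_left (Real.rpow_le_rpow_of_exponent_ge hh hh1 hexp) hD
    _ = D * h ^ (p + 1) := by norm_cast

lemma abs_sum_jump_le {p : ℕ} {h D x₀ x : ℝ} {J : ℕ → ℝ}
    (hh : 0 < h) (hh1 : h ≤ 1) (hD : 0 ≤ D)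
    (hJ : ∀ l ≤ p, |J l| ≤ D * h ^ ((p : ℝ) + 2 - l * (1 + 1 / p))) (hx : |x - x₀| ≤ h) :
    |∑ l ∈ range (p + 1), J l / (2 * l !) * (x - x₀) ^ l| ≤ Real.exp 1 * D * h ^ (p + 1) := by
  have hterm : ∀ l ∈ range (p + 1), |J l * (x - x₀) ^ l / 2| ≤ D * h ^ (p + 1) := by
    intro l hl
    rw [abs_div, abs_two]
    refine (div_le_self (abs_nonneg _) one_le_two).trans ?_
    exact abs_mul_pow_le_of_abs_le_rpow (mem_range_succ_iff.mp hl) hh hh1 hD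
      (hJ l (mem_range_succ_iff.mp hl)) hx
  rw [mul_assoc]
  convert abs_sum_div_factorial_le (by positivity) hterm using 3 with l
  ring

lemma sqrt_setIntegral_sq_le {α : Type*} [MeasurableSpace α] {μ : Measure α} {s : Set α}
    {f : α → ℝ} {C : ℝ} (hs : μ s < ⊤) (hC : 0 ≤ C) (hf : ∀ᵐ x ∂μ, x ∈ s → |f x| ≤ C) :
    Real.sqrt (∫ x in s, f x ^ 2 ∂μ) ≤ C * Real.sqrt (μ.real s) := by
  have hsq : ∀ᵐ x ∂μ, x ∈ s → ‖f x ^ 2‖ ≤ C ^ 2 := by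
    filter_upwards [hf] with x hx hxs
    rw [Real.norm_eq_abs, abs_pow]
    gcongr
    exact hx hxs
  have hint : ∫ x in s, f x ^ 2 ∂μ ≤ C ^ 2 * μ.real s :=
    (le_abs_self _).trans (norm_setIntegral_le_of_norm_le_const_ae' hs hsq)
  calc Real.sqrt (∫ x in s, f x ^ 2 ∂μ) ≤ Real.sqrt (C ^ 2 * μ.real s) := Real.sqrt_le_sqrt hint
    _ = C * Real.sqrt (μ.real s) := by rw [Real.sqrt_mul (sq_nonneg C), Real.sqrt_sq hC]

lemma pow_succ_mul_sqrt_two_mul {h : ℝ} (hh : 0 < h) (p : ℕ) :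
    h ^ (p + 1) * Real.sqrt (2 * h) = Real.sqrt 2 * h ^ ((p : ℝ) + 3 / 2) := by
  rw [Real.sqrt_mul zero_le_two, Real.sqrt_eq_rpow h, ← Real.rpow_natCast,
    show (p : ℝ) + 3 / 2 = ((p + 1 : ℕ) : ℝ) + 1 / 2 by push_cast; ring, Real.rpow_add hh]
  ring

theorem antisymmetric_jump_L2_bound_general (p : ℕ) (h D x₀ : ℝ)
    (hh : 0 < h) (hh1 : h ≤ 1) (hD : 0 ≤ D) (J : ℕ → ℝ)
    (hJ : ∀ l ≤ p, |J l| ≤ D * h ^ ((p : ℝ) + 2 - l * (1 + 1 / p)))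
    (w : ℝ → ℝ)
    (hw_right : ∀ x, x₀ < x →
      w x = ∑ l ∈ range (p + 1), J l / (2 * Nat.factorial l) * (x - x₀) ^ l)
    (hw_left : ∀ x, x < x₀ →
      w x = -∑ l ∈ range (p + 1), J l / (2 * Nat.factorial l) * (x - x₀) ^ l) :
    Real.sqrt (∫ x in Set.Ioo (x₀ - h) (x₀ + h), (w x) ^ 2) ≤
      Real.sqrt 2 * Real.exp 1 * D * h ^ ((p : ℝ) + 3 / 2) := by
  have hw : ∀ᵐ x ∂volume, x ∈ Set.Ioo (x₀ - h) (x₀ + h) →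
      |w x| ≤ Real.exp 1 * D * h ^ (p + 1) := by
    filter_upwards [Measure.ae_ne volume x₀] with x hne hx
    have hxh : |x - x₀| ≤ h := abs_sub_le_iff.mpr ⟨by linarith [hx.2], by linarith [hx.1]⟩
    rcases hne.lt_or_gt with hlt | hgt
    · rw [hw_left x hlt, abs_neg]; exact abs_sum_jump_le hh hh1 hD hJ hxh
    · rw [hw_right x hgt]; exact abs_sum_jump_le hh hh1 hD hJ hxh
  calc Real.sqrt (∫ x in Set.Ioo (x₀ - h) (x₀ + h), (w x) ^ 2)
      ≤ Real.exp 1 * D * h ^ (p + 1) * Real.sqrt (volume.real (Set.Ioo (x₀ - h) (x₀ + h))) :=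
        sqrt_setIntegral_sq_le measure_Ioo_lt_top (by positivity) hw
    _ = Real.sqrt 2 * Real.exp 1 * D * h ^ ((p : ℝ) + 3 / 2) := by
        rw [Real.volume_real_Ioo, max_eq_left (by linarith), mul_assoc,
          show x₀ + h - (x₀ - h) = 2 * h by ring, pow_succ_mul_sqrt_two_mul hh]
        ring

/-- L² bound on the antisymmetrized jump function across the cell boundary `x₀`
(used in the projection-error Lemma 5.8). -/
theorem antisymmetric_jump_L2_bound (p : ℕ) (hp : 1 ≤ p) (h D x₀ : ℝ)
    (hh : 0 < h) (hh1 : h ≤ 1) (hD : 0 ≤ D) (J : ℕ → ℝ)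
    (hJ : ∀ l ≤ p, |J l| ≤ D * h ^ ((p : ℝ) + 2 - l * (1 + 1 / p)))
    (w : ℝ → ℝ)
    (hw_right : ∀ x, x₀ < x →
      w x = ∑ l ∈ range (p + 1), J l / (2 * Nat.factorial l) * (x - x₀) ^ l)
    (hw_left : ∀ x, x < x₀ →
      w x = -∑ l ∈ range (p + 1), J l / (2 * Nat.factorial l) * (x - x₀) ^ l) :
    Real.sqrt (∫ x in Set.Ioo (x₀ - h) (x₀ + h), (w x) ^ 2) ≤
      Real.sqrt 2 * Real.exp 1 * D * h ^ ((p : ℝ) + 3 / 2) :=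
  antisymmetric_jump_L2_bound_general p h D x₀ hh hh1 hD J hJ w hw_right hw_left
end

section
/- Combining the previous facts: let I be an interval of length ≤ 2h, 0 < h ≤ 1, let û : I → ℝ be piecewise polynomial of degree ≤ p with a single interior breakpoint x₀, with derivative jumps J_l = û^{(l)}(x₀⁺) − û^{(l)}(x₀⁻) satisfying |J_l| ≤ 2D·h^{p+2-l(1+α)} (α = 1/p), and let P be the L²(I)-orthogonal projection onto polynomials of degree ≤ p on I. Then ‖P û − û‖_{L¹(I)} ≤ C·D·h^{p+2} for an absolute constant C (one may take C = 2√2·e). -/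
open MeasureTheory Polynomial

/-!
On the shorter side of `x₀`, which has length at most `h`, `û` differs from the polynomial piece of
the longer side `v` by the jump polynomial `qR - qL`; Taylor expansion at `x₀` and the jump bounds
make it at most `2eD h^(p+1)` there. Since `r` is the best `L²` approximation by polynomials of
degree `≤ p`, `‖r - û‖₂ ≤ ‖v - û‖₂ ≤ 2eD h^(p+1) √h`, and Cauchy–Schwarz on an interval of length
`≤ 2h` turns this into the `L¹` bound.
-/

namespace Polynomial

theorem eval_eq_sum_range_iterate_derivative {K : Type*} [Field K] [CharZero K] {q : K[X]} {n : ℕ}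
    (hq : q.natDegree < n) (x₀ x : K) :
    q.eval x = ∑ i ∈ Finset.range n, (derivative^[i] q).eval x₀ / i.factorial * (x - x₀) ^ i := by
  have hcoeff (i : ℕ) : (taylor x₀ q).coeff i = (derivative^[i] q).eval x₀ / i.factorial := by
    rw [taylor_coeff, ← factorial_smul_hasseDeriv, LinearMap.smul_apply, eval_smul, nsmul_eq_mul,
      mul_div_cancel_left₀ _ (Nat.cast_ne_zero.mpr i.factorial_ne_zero)]
  rw [← taylor_eval_sub x₀, eval_eq_sum_range' (by rwa [natDegree_taylor])]
  simp only [hcoeff]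

theorem abs_eval_le_mul_exp_one {q : ℝ[X]} {p : ℕ} (hq : q.natDegree ≤ p) {x₀ x h M : ℝ}
    (hx : |x - x₀| ≤ h) (hM : ∀ i ≤ p, |(derivative^[i] q).eval x₀| * h ^ i ≤ M) :
    |q.eval x| ≤ M * Real.exp 1 := by
  have hM0 : 0 ≤ M := (abs_nonneg _).trans (by simpa using hM 0 p.zero_le)
  rw [eval_eq_sum_range_iterate_derivative (Nat.lt_succ_of_le hq) x₀]
  calc |∑ i ∈ Finset.range (p + 1), (derivative^[i] q).eval x₀ / i.factorial * (x - x₀) ^ i|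
      ≤ ∑ i ∈ Finset.range (p + 1), M * (1 ^ i / i.factorial) := by
        refine (Finset.abs_sum_le_sum_abs _ _).trans (Finset.sum_le_sum fun i hi => ?_)
        have hxi : |x - x₀| ^ i ≤ h ^ i := pow_le_pow_left₀ (abs_nonneg _) hx i
        rw [abs_mul, abs_div, Nat.abs_cast, abs_pow, one_pow, div_mul_eq_mul_div, mul_one_div]
        gcongr
        exact (mul_le_mul_of_nonneg_left hxi (abs_nonneg _)).trans
          (hM i (Nat.lt_succ_iff.mp (Finset.mem_range.mp hi)))
    _ ≤ M * Real.exp 1 := by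
        rw [← Finset.mul_sum]
        exact mul_le_mul_of_nonneg_left (Real.sum_le_exp_of_nonneg zero_le_one _) hM0

end Polynomial

theorem rpow_jump_exponent_mul_pow_le {p i : ℕ} (hp : 1 ≤ p) (hi : i ≤ p) {h : ℝ} (hh : 0 < h)
    (hh1 : h ≤ 1) : h ^ ((p : ℝ) + 2 - i * (1 + 1 / p)) * h ^ i ≤ h ^ (p + 1) := by
  have hp0 : (0 : ℝ) < p := by exact_mod_cast hp
  have hip : (i : ℝ) / p ≤ 1 := div_le_one_of_le₀ (by exact_mod_cast hi) hp0.le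
  rw [← Real.rpow_natCast h i, ← Real.rpow_add hh, ← Real.rpow_natCast h (p + 1)]
  refine Real.rpow_le_rpow_of_exponent_ge hh hh1 ?_
  rw [mul_add, mul_one_div]
  push_cast
  linarith

theorem abs_eval_le_of_abs_iterate_derivative_le {p : ℕ} (hp : 1 ≤ p) {h C x₀ x : ℝ} (hh : 0 < h)
    (hh1 : h ≤ 1) (hC : 0 ≤ C) {q : ℝ[X]} (hq : q.degree ≤ p)
    (hder : ∀ l ≤ p, |(derivative^[l] q).eval x₀| ≤ C * h ^ ((p : ℝ) + 2 - l * (1 + 1 / p)))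
    (hx : |x - x₀| ≤ h) : |q.eval x| ≤ C * h ^ (p + 1) * Real.exp 1 := by
  refine abs_eval_le_mul_exp_one (natDegree_le_of_degree_le hq) hx fun i hi => ?_
  calc |(derivative^[i] q).eval x₀| * h ^ i
      ≤ C * (h ^ ((p : ℝ) + 2 - i * (1 + 1 / p)) * h ^ i) := by
        rw [← mul_assoc]
        exact mul_le_mul_of_nonneg_right (hder i hi) (by positivity)
    _ ≤ C * h ^ (p + 1) :=
        mul_le_mul_of_nonneg_left (rpow_jump_exponent_mul_pow_le hp hi hh hh1) hC

section L2

variable {α : Type*} [MeasurableSpace α] {μ : Measure α}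

theorem integral_sq_le_integral_add_sq_of_integral_mul_eq_zero {e d : α → ℝ} (he : MemLp e 2 μ)
    (hd : MemLp d 2 μ) (horth : ∫ x, e x * d x ∂μ = 0) :
    ∫ x, e x ^ 2 ∂μ ≤ ∫ x, (e x + d x) ^ 2 ∂μ := by
  have hexp : (fun x => (e x + d x) ^ 2) = fun x => e x ^ 2 + 2 * (e x * d x) + d x ^ 2 := by
    ext x; ring
  have hed : Integrable (fun x => 2 * (e x * d x)) μ := (he.integrable_mul hd).const_mul 2
  have hsum : Integrable (fun x => e x ^ 2 + 2 * (e x * d x)) μ := he.integrable_sq.add hed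
  rw [hexp, integral_add hsum hd.integrable_sq,
    integral_add he.integrable_sq hed, integral_const_mul, horth]
  linarith [integral_nonneg (μ := μ) (f := fun x => d x ^ 2) fun x => sq_nonneg (d x)]

theorem integral_abs_le_sqrt_integral_sq_mul_sqrt_measureReal [IsFiniteMeasure μ] {f : α → ℝ}
    (hf : MemLp f 2 μ) : ∫ x, |f x| ∂μ ≤ √(∫ x, f x ^ 2 ∂μ) * √(μ.real Set.univ) := by
  have hconj : Real.HolderConjugate 2 2 := Real.holderConjugate_iff.mpr ⟨one_lt_two, by norm_num⟩
  have h2 : ENNReal.ofReal 2 = 2 := by norm_num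
  have hf_abs : MemLp (fun x => |f x|) (ENNReal.ofReal 2) μ := h2 ▸ hf.abs
  have hone : MemLp (fun _ => (1 : ℝ)) (ENNReal.ofReal 2) μ := memLp_const 1
  have := integral_mul_le_Lp_mul_Lq_of_nonneg hconj (.of_forall fun x => abs_nonneg (f x))
    (.of_forall fun _ => zero_le_one) hf_abs hone
  simpa [Real.sqrt_eq_rpow, Real.rpow_two, sq_abs] using this

theorem integral_sq_le_of_abs_le_indicator {f : α → ℝ} {T : Set α} {K : ℝ} (hT : MeasurableSet T)
    (hTfin : μ T ≠ ⊤) (hf : ∀ᵐ x ∂μ, |f x| ≤ T.indicator (fun _ => K) x) :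
    ∫ x, f x ^ 2 ∂μ ≤ K ^ 2 * μ.real T := by
  have hsq : ∀ᵐ x ∂μ, f x ^ 2 ≤ T.indicator (fun _ => K ^ 2) x := by
    filter_upwards [hf] with x hx
    by_cases hxT : x ∈ T
    · rw [Set.indicator_of_mem hxT] at hx ⊢
      exact sq_le_sq' (abs_le.mp hx).1 (abs_le.mp hx).2
    · rw [Set.indicator_of_notMem hxT] at hx ⊢
      simp [abs_nonpos_iff.mp hx]
  calc ∫ x, f x ^ 2 ∂μ ≤ ∫ x, T.indicator (fun _ => K ^ 2) x ∂μ :=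
        integral_mono_of_nonneg (.of_forall fun x => sq_nonneg (f x))
          ((integrable_indicator_iff hT).mpr (integrableOn_const hTfin)) hsq
    _ = K ^ 2 * μ.real T := by rw [integral_indicator_const _ hT, smul_eq_mul, mul_comm]

theorem integral_abs_sub_le_of_orthogonal [IsFiniteMeasure μ] {u r v : α → ℝ}
    (huv : MemLp (fun x => u x - v x) 2 μ) (hrv : MemLp (fun x => r x - v x) 2 μ)
    (horth : ∫ x, (u x - r x) * (r x - v x) ∂μ = 0) :
    ∫ x, |r x - u x| ∂μ ≤ √(∫ x, (u x - v x) ^ 2 ∂μ) * √(μ.real Set.univ) := by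
  have hur : MemLp (fun x => u x - r x) 2 μ := by
    convert huv.sub hrv using 1
    ext x
    simp
  calc ∫ x, |r x - u x| ∂μ = ∫ x, |u x - r x| ∂μ := by simp only [abs_sub_comm]
    _ ≤ √(∫ x, (u x - r x) ^ 2 ∂μ) * √(μ.real Set.univ) :=
        integral_abs_le_sqrt_integral_sq_mul_sqrt_measureReal hur
    _ ≤ √(∫ x, (u x - v x) ^ 2 ∂μ) * √(μ.real Set.univ) := by
        refine mul_le_mul_of_nonneg_right (Real.sqrt_le_sqrt ?_) (Real.sqrt_nonneg _)
        simpa only [sub_add_sub_cancel] using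
          integral_sq_le_integral_add_sq_of_integral_mul_eq_zero hur hrv horth

end L2

theorem Continuous.memLp_restrict_Ioo {f : ℝ → ℝ} (hf : Continuous f) (a b : ℝ)
    {q : ENNReal} : MemLp f q (volume.restrict (Set.Ioo a b)) := by
  obtain ⟨C, hC⟩ := isCompact_Icc.exists_bound_of_continuousOn (s := Set.Icc a b) hf.continuousOn
  exact MemLp.of_bound hf.aestronglyMeasurable C
    (ae_restrict_of_forall_mem measurableSet_Ioo fun x hx => hC x (Set.Ioo_subset_Icc_self hx))

section TwoPieces

variable {u f g : ℝ → ℝ} {a b x₀ : ℝ}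

theorem aestronglyMeasurable_restrict_Ioo_of_eq_piecewise (hf : Continuous f) (hg : Continuous g)
    (hfu : ∀ x ∈ Set.Ioo a b, x < x₀ → u x = f x) (hgu : ∀ x ∈ Set.Ioo a b, x₀ ≤ x → u x = g x) :
    AEStronglyMeasurable u (volume.restrict (Set.Ioo a b)) := by
  have hpiece : Measurable fun x => if x < x₀ then f x else g x :=
    Measurable.ite measurableSet_Iio hf.measurable hg.measurable
  refine hpiece.aestronglyMeasurable.congr ?_
  filter_upwards [ae_restrict_mem measurableSet_Ioo] with x hx
  by_cases hxx : x < x₀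
  · rw [if_pos hxx, hfu x hx hxx]
  · rw [if_neg hxx, hgu x hx (not_lt.mp hxx)]

theorem exists_abs_sub_le_indicator_of_short_side {h K : ℝ} (hlen : b - a ≤ 2 * h)
    (hax : a < x₀) (hxb : x₀ < b) (hfu : ∀ x ∈ Set.Ioo a b, x < x₀ → u x = f x)
    (hgu : ∀ x ∈ Set.Ioo a b, x₀ ≤ x → u x = g x) (hjump : ∀ x, |x - x₀| ≤ h → |g x - f x| ≤ K) :
    ∃ v, (v = f ∨ v = g) ∧ ∃ T ⊆ Set.Ioo a b, MeasurableSet T ∧ volume.real T ≤ h ∧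
      ∀ x ∈ Set.Ioo a b, |u x - v x| ≤ T.indicator (fun _ => K) x := by
  by_cases hside : x₀ - a ≤ h
  · refine ⟨g, Or.inr rfl, Set.Ioo a x₀, Set.Ioo_subset_Ioo_right hxb.le, measurableSet_Ioo,
      by rw [Real.volume_real_Ioo]; exact max_le hside (by linarith), fun x hx => ?_⟩
    by_cases hxx : x < x₀
    · rw [hfu x hx hxx, Set.indicator_of_mem (Set.mem_Ioo.mpr ⟨hx.1, hxx⟩), abs_sub_comm]
      exact hjump x (abs_le.mpr ⟨by linarith [hx.1], by linarith⟩)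
    · rw [hgu x hx (not_lt.mp hxx), Set.indicator_of_notMem fun hm => hxx hm.2, sub_self,
        abs_zero]
  · refine ⟨f, Or.inl rfl, Set.Ico x₀ b, fun x hx => ⟨hax.trans_le hx.1, hx.2⟩, measurableSet_Ico,
      by rw [Real.volume_real_Ico]; exact max_le (by linarith) (by linarith), fun x hx => ?_⟩
    by_cases hxx : x₀ ≤ x
    · rw [hgu x hx hxx, Set.indicator_of_mem (Set.mem_Ico.mpr ⟨hxx, hx.2⟩)]
      exact hjump x (abs_le.mpr ⟨by linarith, by linarith [hx.2]⟩)
    · rw [hfu x hx (not_le.mp hxx), Set.indicator_of_notMem fun hm => hxx hm.1, sub_self,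
        abs_zero]

end TwoPieces

theorem projection_error_special_cell_general (p : ℕ) (hp : 1 ≤ p) (a b x₀ h D : ℝ)
    (hh : 0 < h) (hh1 : h ≤ 1) (hD : 0 ≤ D)
    (hlen : b - a ≤ 2 * h) (hax : a < x₀) (hxb : x₀ < b)
    (uhat : ℝ → ℝ) (qL qR : Polynomial ℝ)
    (hdegL : qL.degree ≤ (p : ℕ)) (hdegR : qR.degree ≤ (p : ℕ))
    (huL : ∀ x ∈ Set.Ioo a b, x < x₀ → uhat x = qL.eval x)
    (huR : ∀ x ∈ Set.Ioo a b, x₀ ≤ x → uhat x = qR.eval x)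
    (hJ : ∀ l ≤ p,
      |(derivative^[l] qR).eval x₀ - (derivative^[l] qL).eval x₀| ≤
        2 * D * h ^ ((p : ℝ) + 2 - l * (1 + 1 / p)))
    -- r is the L²(a,b)-orthogonal projection of uhat onto polynomials of degree ≤ p
    (r : Polynomial ℝ) (hdegr : r.degree ≤ (p : ℕ))
    (horth : ∀ s : Polynomial ℝ, s.degree ≤ (p : ℕ) →
      ∫ x in Set.Ioo a b, (uhat x - r.eval x) * s.eval x = 0) :
    ∫ x in Set.Ioo a b, |r.eval x - uhat x| ≤
      2 * Real.sqrt 2 * Real.exp 1 * D * h ^ (p + 2) := by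
  set K := 2 * D * h ^ (p + 1) * Real.exp 1
  have hK : 0 ≤ K := by positivity
  have hjump (x : ℝ) (hx : |x - x₀| ≤ h) : |qR.eval x - qL.eval x| ≤ K := by
    simpa using abs_eval_le_of_abs_iterate_derivative_le hp hh hh1 (by positivity)
      ((degree_sub_le qR qL).trans (max_le hdegR hdegL))
      (by simpa only [iterate_derivative_sub, eval_sub] using hJ) hx
  obtain ⟨v, hv, T, hTS, hT, hTh, huv⟩ :=
    exists_abs_sub_le_indicator_of_short_side hlen hax hxb huL huR hjump
  obtain ⟨s, hs, rfl⟩ : ∃ s : ℝ[X], s.degree ≤ p ∧ v = fun x => s.eval x := by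
    rcases hv with rfl | rfl
    exacts [⟨qL, hdegL, rfl⟩, ⟨qR, hdegR, rfl⟩]
  have huv_memLp : MemLp (fun x => uhat x - s.eval x) 2 (volume.restrict (Set.Ioo a b)) :=
    MemLp.of_bound ((aestronglyMeasurable_restrict_Ioo_of_eq_piecewise qL.continuous qR.continuous
      huL huR).sub s.continuous.aestronglyMeasurable) K
      (ae_restrict_of_forall_mem measurableSet_Ioo fun x hx =>
        (huv x hx).trans (Set.indicator_le_self' (fun _ _ => hK) x))
  have hvolT : (volume.restrict (Set.Ioo a b)).real T ≤ h := by
    rwa [measureReal_restrict_apply hT, Set.inter_eq_left.mpr hTS]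
  have hvolS : (volume.restrict (Set.Ioo a b)).real Set.univ ≤ 2 * h := by
    rw [measureReal_restrict_apply_univ, Real.volume_real_Ioo]
    exact max_le hlen (by positivity)
  calc ∫ x in Set.Ioo a b, |r.eval x - uhat x|
      ≤ √(∫ x in Set.Ioo a b, (uhat x - s.eval x) ^ 2) *
          √((volume.restrict (Set.Ioo a b)).real Set.univ) :=
        integral_abs_sub_le_of_orthogonal huv_memLp
          (by simpa using (r - s).continuous.memLp_restrict_Ioo a b)
          (by simpa using horth (r - s) ((degree_sub_le r s).trans (max_le hdegr hs)))
    _ ≤ √(K ^ 2 * h) * √(2 * h) := by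
        gcongr
        exact (integral_sq_le_of_abs_le_indicator hT (measure_ne_top _ _)
          (ae_restrict_of_forall_mem measurableSet_Ioo huv)).trans (by gcongr)
    _ = 2 * Real.sqrt 2 * Real.exp 1 * D * h ^ (p + 2) := by
        rw [← Real.sqrt_mul (by positivity), show K ^ 2 * h * (2 * h) = 2 * (K * h) ^ 2 by ring,
          Real.sqrt_mul zero_le_two, Real.sqrt_sq (by positivity)]
        ring

/-- Lemma 5.8: the L¹ error of the L² projection of a piecewise polynomial with
numerically smooth derivative jumps onto polynomials of degree ≤ p is of order `h^(p+2)`.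
The projection is characterized by its orthogonality property. -/
theorem projection_error_special_cell (p : ℕ) (hp : 1 ≤ p) (a b x₀ h D : ℝ)
    (hh : 0 < h) (hh1 : h ≤ 1) (hD : 0 ≤ D)
    (hab : a < b) (hlen : b - a ≤ 2 * h) (hax : a < x₀) (hxb : x₀ < b)
    (uhat : ℝ → ℝ) (qL qR : Polynomial ℝ)
    (hdegL : qL.degree ≤ (p : ℕ)) (hdegR : qR.degree ≤ (p : ℕ))
    (huL : ∀ x ∈ Set.Ioo a b, x < x₀ → uhat x = qL.eval x)
    (huR : ∀ x ∈ Set.Ioo a b, x₀ ≤ x → uhat x = qR.eval x)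
    (hJ : ∀ l ≤ p,
      |(derivative^[l] qR).eval x₀ - (derivative^[l] qL).eval x₀| ≤
        2 * D * h ^ ((p : ℝ) + 2 - l * (1 + 1 / p)))
    -- r is the L²(a,b)-orthogonal projection of uhat onto polynomials of degree ≤ p
    (r : Polynomial ℝ) (hdegr : r.degree ≤ (p : ℕ))
    (horth : ∀ s : Polynomial ℝ, s.degree ≤ (p : ℕ) →
      ∫ x in Set.Ioo a b, (uhat x - r.eval x) * s.eval x = 0) :
    ∫ x in Set.Ioo a b, |r.eval x - uhat x| ≤
      2 * Real.sqrt 2 * Real.exp 1 * D * h ^ (p + 2) :=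
  projection_error_special_cell_general p hp a b x₀ h D hh hh1 hD hlen hax hxb uhat qL qR hdegL
    hdegR huL huR hJ r hdegr horth
end
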